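/- arXiv:0802.3956 — 3 statements merged into one kernel-verified Lean document; each statement's English description precedes it below -/
import Mathlib

section
/- For every subset S of the unit Euclidean sphere S^{n−1} ⊆ ℝ^n and every ε > 0, there exists an ε-net N ⊆ S of S of cardinality at most 2n(1 + 2/ε)^{n−1}. -/
/-!
A maximal `ε`-separated subset `N` of `S` is an `ε`-net of `S`. The closed balls of radius
`ε / 2` about the points of `N` are pairwise disjoint, miss the open ball of radius `1 - ε / 2`
and lie in the closed ball of radius `1 + ε / 2`. Comparing Haar volumes gives
`#N (ε/2)^n ≤ (1 + ε/2)^n - (1 - ε/2)^n ≤ n ε (1 + ε/2)^(n-1)`, which is the bound; in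
particular every `ε`-separated subset of the sphere is finite, so maximal ones exist.
-/

open Metric Set MeasureTheory Measure Module
open scoped NNReal

theorem pow_sub_pow_le_sub_mul_pow {α : Type*} [CommRing α] [LinearOrder α] [IsOrderedRing α]
    {a b : α} (hb : 0 ≤ b) (hba : b ≤ a) (n : ℕ) :
    a ^ n - b ^ n ≤ (a - b) * n * a ^ (n - 1) := by
  have h := abs_pow_sub_pow_le a b n
  rwa [abs_of_nonneg (sub_nonneg.2 (pow_le_pow_left₀ hb hba n)), abs_of_nonneg (sub_nonneg.2 hba),
    abs_of_nonneg hb, abs_of_nonneg (hb.trans hba), max_eq_left hba] at h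

section

variable {E : Type*} [NormedAddCommGroup E] [NormedSpace ℝ E] [FiniteDimensional ℝ E]

/-- The inner radius is clamped at `0`, so that `ρ > 1` (where the inner ball is empty) needs no
separate case. -/
theorem Finset.card_mul_pow_add_pow_le_of_pairwiseDisjoint_closedBall [Nontrivial E]
    {F : Finset E} (hF : (F : Set E) ⊆ sphere 0 1) {ρ : ℝ} (hρ : 0 ≤ ρ)
    (hdisj : (F : Set E).PairwiseDisjoint (closedBall · ρ)) :
    F.card * ρ ^ finrank ℝ E + max 0 (1 - ρ) ^ finrank ℝ E ≤ (1 + ρ) ^ finrank ℝ E := by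
  borelize E
  let μ : Measure E := addHaar
  have hball (r : ℝ) (hr : 0 ≤ r) :
      μ.real (ball 0 r) = r ^ finrank ℝ E * μ.real (ball 0 1) := by
    rw [← addHaar_real_closedBall_eq_addHaar_real_ball, addHaar_real_closedBall μ _ hr]
  have hnorm : ∀ x ∈ F, ∀ y ∈ closedBall x ρ, 1 - ρ ≤ ‖y‖ ∧ ‖y‖ ≤ 1 + ρ := by
    intro x hx y hy
    rw [mem_closedBall, dist_eq_norm] at hy
    have hx1 : ‖x‖ = 1 := by simpa using hF hx
    constructor <;> linarith [norm_sub_norm_le x y, norm_sub_norm_le y x, norm_sub_rev x y]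
  have hdisj_inner : Disjoint (⋃ x ∈ F, closedBall x ρ) (ball 0 (max 0 (1 - ρ))) := by
    simp only [Set.disjoint_left, mem_iUnion₂, mem_ball_zero_iff, lt_max_iff, not_or, not_lt]
    rintro y ⟨x, hx, hy⟩
    exact ⟨norm_nonneg y, (hnorm x hx y hy).1⟩
  have hsub : (⋃ x ∈ F, closedBall x ρ) ∪ ball 0 (max 0 (1 - ρ)) ⊆ closedBall 0 (1 + ρ) := by
    refine Set.union_subset (iUnion₂_subset fun x hx y hy => ?_) (ball_subset_closedBall.trans ?_)
    · simpa using (hnorm x hx y hy).2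
    · exact closedBall_subset_closedBall (max_le (by linarith) (by linarith))
  have hpos : 0 < μ.real (ball (0 : E) 1) :=
    ENNReal.toReal_pos (measure_ball_pos μ 0 one_pos).ne' measure_ball_lt_top.ne
  refine le_of_mul_le_mul_right ?_ hpos
  calc (F.card * ρ ^ finrank ℝ E + max 0 (1 - ρ) ^ finrank ℝ E) * μ.real (ball 0 1)
      = μ.real (⋃ x ∈ F, closedBall x ρ) + μ.real (ball 0 (max 0 (1 - ρ))) := by
        rw [measureReal_biUnion_finset hdisj (fun _ _ => measurableSet_closedBall)
          (fun _ _ => measure_closedBall_lt_top.ne), hball _ (le_max_left _ _)]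
        simp only [addHaar_real_closedBall μ _ hρ, Finset.sum_const, nsmul_eq_mul]
        ring
    _ = μ.real ((⋃ x ∈ F, closedBall x ρ) ∪ ball 0 (max 0 (1 - ρ))) :=
        (measureReal_union hdisj_inner measurableSet_ball
          (measure_lt_top_of_subset (Set.subset_union_left.trans hsub)
            measure_closedBall_lt_top.ne).ne measure_ball_lt_top.ne).symm
    _ ≤ μ.real (closedBall 0 (1 + ρ)) := measureReal_mono hsub measure_closedBall_lt_top.ne
    _ = (1 + ρ) ^ finrank ℝ E * μ.real (ball 0 1) := addHaar_real_closedBall μ _ (by linarith)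

theorem Finset.card_le_of_isSeparated_of_subset_sphere [Nontrivial E] {ε : ℝ≥0} (hε : 0 < ε)
    {F : Finset E} (hF : (F : Set E) ⊆ sphere 0 1) (hsep : IsSeparated ε (F : Set E)) :
    (F.card : ℝ) ≤ 2 * finrank ℝ E * (1 + 2 / ε) ^ (finrank ℝ E - 1) := by
  set d := finrank ℝ E
  obtain ⟨ρ, hρε, hρ⟩ : ∃ ρ : ℝ, ε = 2 * ρ ∧ 0 < ρ := ⟨ε / 2, by ring, by positivity⟩
  have hdisj : (F : Set E).PairwiseDisjoint (closedBall · ρ) := fun x hx y hy hxy => by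
    refine closedBall_disjoint_closedBall ?_
    have : (ε : ℝ) < dist x y := by simpa [edist_dist] using hsep hx hy hxy
    linarith
  have hvol := F.card_mul_pow_add_pow_le_of_pairwiseDisjoint_closedBall hF hρ.le hdisj
  have hdiff : (1 + ρ) ^ d - max 0 (1 - ρ) ^ d ≤ 2 * ρ * d * (1 + ρ) ^ (d - 1) := by
    refine (pow_sub_pow_le_sub_mul_pow (le_max_left _ _)
      (max_le (by linarith) (by linarith)) d).trans ?_
    gcongr
    linarith [le_max_right 0 (1 - ρ)]
  obtain ⟨k, hk⟩ : ∃ k, d = k + 1 := Nat.exists_eq_add_one.2 finrank_pos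
  have key : (F.card : ℝ) * ρ ^ d ≤ 2 * d * (1 + 2 / ε) ^ (d - 1) * ρ ^ d := calc
    (F.card : ℝ) * ρ ^ d ≤ (1 + ρ) ^ d - max 0 (1 - ρ) ^ d := by linarith
    _ ≤ 2 * ρ * d * (1 + ρ) ^ (d - 1) := hdiff
    _ = 2 * d * (1 + 2 / ε) ^ (d - 1) * ρ ^ d := by
      have : 1 + 2 / (2 * ρ) = (1 + ρ) / ρ := by field_simp; ring
      rw [hk, Nat.add_sub_cancel, hρε, this, div_pow, pow_succ]
      field_simp
  exact le_of_mul_le_mul_right key (by positivity)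

theorem Metric.IsSeparated.encard_le_of_subset_sphere [Nontrivial E] {ε : ℝ≥0} (hε : 0 < ε)
    {C : Set E} (hC : C ⊆ sphere 0 1) (hsep : IsSeparated ε C) :
    C.encard ≤ ⌊2 * finrank ℝ E * (1 + 2 / (ε : ℝ)) ^ (finrank ℝ E - 1)⌋₊ := by
  have hfinset (F : Finset E) (hF : (F : Set E) ⊆ C) :
      F.card ≤ ⌊2 * finrank ℝ E * (1 + 2 / (ε : ℝ)) ^ (finrank ℝ E - 1)⌋₊ :=
    Nat.le_floor (F.card_le_of_isSeparated_of_subset_sphere hε (hF.trans hC) (hsep.subset hF))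
  have hfin : C.Finite := by
    by_contra hinf
    obtain ⟨F, hFC, hF⟩ := Set.Infinite.exists_subset_card_eq hinf
      (⌊2 * finrank ℝ E * (1 + 2 / (ε : ℝ)) ^ (finrank ℝ E - 1)⌋₊ + 1)
    have := hfinset F hFC
    omega
  rw [encard_le_coe_iff_finite_ncard_le, ncard_eq_toFinset_card C hfin]
  exact ⟨hfin, hfinset _ (by simp)⟩

theorem exists_finite_net_of_subset_sphere {S : Set E} (hS : S ⊆ sphere 0 1) {ε : ℝ}
    (hε : 0 < ε) :
    ∃ N ⊆ S, (∀ x ∈ S, ∃ y ∈ N, dist x y ≤ ε) ∧ N.Finite ∧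
      (N.ncard : ℝ) ≤ 2 * finrank ℝ E * (1 + 2 / ε) ^ (finrank ℝ E - 1) := by
  rcases S.eq_empty_or_nonempty with rfl | ⟨x, hx⟩
  · exact ⟨∅, empty_subset _, by simp, finite_empty,
      by rw [ncard_empty, Nat.cast_zero]; positivity⟩
  have : Nontrivial E := nontrivial_of_ne x 0 (ne_of_mem_sphere (hS hx) one_ne_zero)
  lift ε to ℝ≥0 using hε.le
  have hbound {C : Set E} (hCS : C ⊆ S) (hC : IsSeparated ε C) :=
    hC.encard_le_of_subset_sphere (mod_cast hε) (hCS.trans hS)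
  have hpacking : packingNumber ε S ≠ ⊤ :=
    ne_top_of_le_ne_top (ENat.natCast_ne_top _) (iSup₂_le fun C hCS => iSup_le (hbound hCS))
  set N := maximalSeparatedSet ε S
  obtain ⟨hfin, hcard⟩ := encard_le_coe_iff_finite_ncard_le.1
    (hbound maximalSeparatedSet_subset isSeparated_maximalSeparatedSet)
  refine ⟨N, maximalSeparatedSet_subset, fun x hx => ?_, hfin,
    (Nat.cast_le.2 hcard).trans (Nat.floor_le (by positivity))⟩
  simpa using (isCover_maximalSeparatedSet hpacking).subset_iUnion_closedBall hx

end

/-- **Nets of subsets of the sphere.** For every subset `S` of the unit Euclidean sphere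
`S^{n−1} ⊆ ℝ^n` and every `ε > 0`, there exists an `ε`-net `𝒩 ⊆ S` of `S` of cardinality
at most `2n(1 + 2/ε)^{n−1}`. -/
theorem net_of_sphere_subset (n : ℕ) (S : Set (EuclideanSpace ℝ (Fin n)))
    (hS : S ⊆ {x : EuclideanSpace ℝ (Fin n) | ‖x‖ = 1}) (ε : ℝ) (hε : 0 < ε) :
    ∃ 𝒩 : Set (EuclideanSpace ℝ (Fin n)), 𝒩 ⊆ S ∧
      (∀ x ∈ S, ∃ y ∈ 𝒩, dist x y ≤ ε) ∧
      𝒩.Finite ∧ (𝒩.ncard : ℝ) ≤ 2 * n * (1 + 2 / ε) ^ (n - 1) := by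
  have hS' : S ⊆ sphere 0 1 := fun x hx => mem_sphere_zero_iff_norm.2 (hS hx)
  simpa [finrank_euclideanSpace_fin] using exists_finite_net_of_subset_sphere hS' hε
end

section
/- For every δ, ρ ∈ (0,1), setting c₁(δ,ρ) = ρ²√δ/2 and c₂(δ) = √δ/2, the following holds: if a ∈ S^{N−1} is an incompressible vector, a ∈ Incomp(δ,ρ), then for every γ with 0 < γ < c₁(δ,ρ) and every α > 0 one has LCD_{α,γ}(a) > c₂(δ)√N. -/
/-!
If `0 < θ < √(δN)/(1+γ)` and `θ • a` lies within `γθ` of a lattice point `p`, then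
`‖p‖ < (1+γ)θ < √(δN)`; an integer vector has at most `‖p‖²` nonzero coordinates, so `p/θ` is
sparse and lies within `γ < ρ` of `a`, contradicting incompressibility. Hence the LCD is at least
`√(δN)/(1+γ) > √δ√N/2`. The infimum is over a nonempty set (so it is not the junk value
`sInf ∅ = 0`) by simultaneous Dirichlet approximation.
-/

open Metric Set Real

noncomputable section

/-- The integer lattice `ℤ^N` inside `ℝ^N`. -/
def intLattice (N : ℕ) : Set (EuclideanSpace ℝ (Fin N)) :=
  {v | ∀ k, ∃ z : ℤ, v k = (z : ℝ)}

/-- The essential least common denominator of a vector `a ∈ ℝ^N`: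
`LCD_{α,γ}(a) = inf { θ > 0 : dist(θa, ℤ^N) < min(γ‖θa‖₂, α) }`. -/
def lcdVec {N : ℕ} (α γ : ℝ) (a : EuclideanSpace ℝ (Fin N)) : ℝ :=
  sInf {θ : ℝ | 0 < θ ∧ Metric.infDist (θ • a) (intLattice N) < min (γ * ‖θ • a‖) α}

/-- The set of sparse vectors: those with support of size at most `δN`. -/
def sparseVecs (N : ℕ) (δ : ℝ) : Set (EuclideanSpace ℝ (Fin N)) :=
  {y | ({k | y k ≠ 0}.ncard : ℝ) ≤ δ * N}

/-- Incompressible unit vectors: unit vectors that are not within Euclidean distance `ρ`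
of the set of sparse vectors. -/
def Incomp (N : ℕ) (δ ρ : ℝ) : Set (EuclideanSpace ℝ (Fin N)) :=
  {x | ‖x‖ = 1 ∧ ¬ Metric.infDist x (sparseVecs N δ) ≤ ρ}

lemma intLattice_nonempty (N : ℕ) : (intLattice N).Nonempty :=
  ⟨0, fun _ => ⟨0, by simp⟩⟩

lemma IsCompact.exists_lt_dist_lt {X : Type*} [PseudoMetricSpace X] {s : Set X}
    (hs : IsCompact s) {u : ℕ → X} (hu : ∀ n, u n ∈ s) {ε : ℝ} (hε : 0 < ε) :
    ∃ i j, i < j ∧ dist (u j) (u i) < ε := by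
  obtain ⟨_, _, φ, hφ, hlim⟩ := hs.tendsto_subseq hu
  obtain ⟨M, hM⟩ := Metric.cauchySeq_iff'.1 hlim.cauchySeq ε hε
  exact ⟨φ M, φ (M + 1), hφ M.lt_succ_self, hM (M + 1) M.le_succ⟩

lemma exists_one_le_infDist_smul_intLattice_lt {N : ℕ} (a : EuclideanSpace ℝ (Fin N))
    {ε : ℝ} (hε : 0 < ε) : ∃ θ : ℝ, 1 ≤ θ ∧ infDist (θ • a) (intLattice N) < ε := by
  set u : ℕ → EuclideanSpace ℝ (Fin N) := fun n => WithLp.toLp 2 fun k => Int.fract (n * a k)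
  have hcpt : IsCompact (WithLp.toLp 2 '' univ.pi fun _ : Fin N => Icc (0 : ℝ) 1) :=
    (isCompact_univ_pi fun _ => isCompact_Icc).image (PiLp.continuous_toLp _ _)
  obtain ⟨i, j, hij, hdist⟩ := hcpt.exists_lt_dist_lt
    (fun n => ⟨_, fun k _ => ⟨Int.fract_nonneg _, (Int.fract_lt_one _).le⟩, rfl⟩) hε
  refine ⟨(j : ℝ) - i, ?_, ?_⟩
  · have : (i : ℝ) + 1 ≤ j := by exact_mod_cast hij
    linarith
  set z : EuclideanSpace ℝ (Fin N) := WithLp.toLp 2 fun k => ((⌊j * a k⌋ - ⌊i * a k⌋ : ℤ) : ℝ)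
  have hz : z ∈ intLattice N := fun k => ⟨_, rfl⟩
  have hdiff : ((j : ℝ) - i) • a - z = u j - u i := by
    ext k
    simp only [z, u, Int.fract, PiLp.sub_apply, PiLp.smul_apply, smul_eq_mul]
    push_cast
    ring
  calc infDist (((j : ℝ) - i) • a) (intLattice N) ≤ dist (((j : ℝ) - i) • a) z :=
        infDist_le_dist_of_mem hz
    _ = dist (u j) (u i) := by rw [dist_eq_norm, dist_eq_norm, hdiff]
    _ < ε := hdist

lemma ncard_support_le_norm_sq {N : ℕ} {p : EuclideanSpace ℝ (Fin N)} (hp : p ∈ intLattice N) :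
    ({k | p k ≠ 0}.ncard : ℝ) ≤ ‖p‖ ^ 2 := by
  classical
  rw [EuclideanSpace.real_norm_sq_eq, Set.ncard_eq_toFinset_card', Set.toFinset_ofPred,
    Finset.card_filter]
  push_cast
  refine Finset.sum_le_sum fun k _ => ?_
  split_ifs with hk
  · obtain ⟨z, hz⟩ := hp k
    have hz0 : z ≠ 0 := by rintro rfl; simp [hz] at hk
    rw [hz, one_le_sq_iff_one_le_abs, ← Int.cast_abs]
    exact_mod_cast Int.one_le_abs hz0
  · positivity

lemma smul_mem_sparseVecs {N : ℕ} {δ : ℝ} {p : EuclideanSpace ℝ (Fin N)}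
    (hp : p ∈ sparseVecs N δ) (c : ℝ) : c • p ∈ sparseVecs N δ := by
  simp only [sparseVecs, Set.mem_ofPred_eq] at hp ⊢
  refine le_trans ?_ hp
  have hsupp : {k | (c • p) k ≠ 0} ⊆ {k | p k ≠ 0} := fun k hk => right_ne_zero_of_mul hk
  exact_mod_cast Set.ncard_le_ncard hsupp (Set.toFinite _)

lemma norm_smul_of_mem_Incomp {N : ℕ} {δ ρ θ : ℝ} {a : EuclideanSpace ℝ (Fin N)}
    (ha : a ∈ Incomp N δ ρ) (hθ : 0 ≤ θ) : ‖θ • a‖ = θ := by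
  rw [norm_smul, ha.1, norm_of_nonneg hθ, mul_one]

lemma sqrt_mul_le_of_infDist_smul_intLattice_lt {N : ℕ} {δ ρ γ θ : ℝ}
    {a : EuclideanSpace ℝ (Fin N)} (ha : a ∈ Incomp N δ ρ) (hγρ : γ ≤ ρ) (hθ : 0 < θ)
    (hd : infDist (θ • a) (intLattice N) < γ * θ) : √(δ * N) ≤ (1 + γ) * θ := by
  by_contra! hsmall
  obtain ⟨p, hp, hdp⟩ := (infDist_lt_iff (intLattice_nonempty N)).1 hd
  have hpnorm : ‖p‖ < √(δ * N) :=
    calc ‖p‖ ≤ ‖θ • a‖ + dist (θ • a) p := by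
          rw [dist_comm, dist_eq_norm]; exact norm_le_norm_add_norm_sub' p (θ • a)
      _ < θ + γ * θ := by rw [norm_smul_of_mem_Incomp ha hθ.le]; gcongr
      _ = (1 + γ) * θ := by ring
      _ < √(δ * N) := hsmall
  have hsparse : θ⁻¹ • p ∈ sparseVecs N δ :=
    smul_mem_sparseVecs ((ncard_support_le_norm_sq hp).trans
      ((Real.lt_sqrt (norm_nonneg p)).1 hpnorm).le) _
  refine ha.2 ((infDist_le_dist_of_mem hsparse).trans (le_of_lt ?_))
  calc dist a (θ⁻¹ • p) = dist (θ⁻¹ • θ • a) (θ⁻¹ • p) := by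
        rw [smul_smul, inv_mul_cancel₀ hθ.ne', one_smul]
    _ = θ⁻¹ * dist (θ • a) p := by rw [dist_smul₀, norm_inv, norm_of_nonneg hθ.le]
    _ < θ⁻¹ * (γ * θ) := by gcongr
    _ = γ := by field_simp
    _ ≤ ρ := hγρ

/-- **LCD of incompressible vectors.** For every `δ, ρ ∈ (0,1)`, with `c₁(δ,ρ) = ρ²√δ/2` and
`c₂(δ) = √δ/2`: if `a ∈ Incomp(δ,ρ)`, then for every `0 < γ < c₁(δ,ρ)` and every `α > 0`,
`LCD_{α,γ}(a) > c₂(δ)√N`. -/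
theorem lcd_of_incompressible (N : ℕ) (δ ρ : ℝ)
    (hδ : δ ∈ Set.Ioo (0 : ℝ) 1) (hρ : ρ ∈ Set.Ioo (0 : ℝ) 1)
    (a : EuclideanSpace ℝ (Fin N)) (ha : a ∈ Incomp N δ ρ)
    (γ : ℝ) (hγ : 0 < γ) (hγ' : γ < ρ ^ 2 * Real.sqrt δ / 2) (α : ℝ) (hα : 0 < α) :
    Real.sqrt δ / 2 * Real.sqrt N < lcdVec α γ a := by
  obtain ⟨hδ0, hδ1⟩ := hδ
  obtain ⟨hρ0, hρ1⟩ := hρ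
  have hN : 0 < N := Nat.pos_of_ne_zero <| by
    rintro rfl
    simpa [Subsingleton.elim a 0] using ha.1
  have hsqrtδ : √δ < 1 := (Real.sqrt_lt' one_pos).2 (by simpa using hδ1)
  have hγρ : γ < ρ := by nlinarith [Real.sqrt_nonneg δ]
  obtain ⟨θ₀, hθ₀, hd₀⟩ := exists_one_le_infDist_smul_intLattice_lt a (lt_min hγ hα)
  have hne : {θ : ℝ | 0 < θ ∧ infDist (θ • a) (intLattice N) < min (γ * ‖θ • a‖) α}.Nonempty :=
    ⟨θ₀, by linarith, hd₀.trans_le <| by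
      rw [norm_smul_of_mem_Incomp ha (by linarith)]; gcongr; nlinarith⟩
  have hpos : 0 < √(δ * N) := Real.sqrt_pos.2 (by positivity)
  calc √δ / 2 * √N = √(δ * N) / 2 := by rw [Real.sqrt_mul hδ0.le]; ring
    _ < √(δ * N) / (1 + γ) := by gcongr; linarith
    _ ≤ lcdVec α γ a := le_csInf hne fun θ ⟨hθ, hd⟩ => by
      rw [div_le_iff₀ (by linarith), mul_comm θ]
      refine sqrt_mul_le_of_infDist_smul_intLattice_lt ha hγρ.le hθ (hd.trans_le ?_)
      rw [norm_smul_of_mem_Incomp ha hθ.le]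
      exact min_le_left _ _
end
end

section
/- Let c₀ > 0. There exists a constant C₀ > 0, depending only on c₀, such that the following holds. Let δ, ρ ∈ (0,1), γ ∈ (0,1), α > 0, and D ≥ c₀√N, and consider the level set S_D := { x ∈ Incomp(δ,ρ) ⊆ S^{N−1} : D ≤ LCD_{α,γ}(x) < 2D }. Then there exists a (4α/D)-net of S_D (contained in S_D) of cardinality at most (C₀ D/√N)^N. -/
/-!
If `x ∈ S_D` and `α ≤ D`, the definition of the LCD yields `θ ∈ [D, 2D)` and a lattice point `v`
with `‖θx - v‖ < α`; then `‖v‖ ≤ 3D` and `x` lies within `α / D` of the ray through `v`. Two unit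
vectors near the same ray are within `4α / D` of each other, so choosing one point of `S_D` per
lattice point of the ball of radius `3D` gives the net. By Cauchy–Schwarz such lattice points have
`ℓ¹`-norm at most `m = 3D√N`, and stars and bars counts them by `2^N (N+m choose N)`, which is at
most `(2e(N+m)/N)^N ≤ (C₀ D/√N)^N` with `C₀ = 2e(3 + 1/c₀)`. If `D < α`, any single point of
`S_D` is already a net.
-/

open Metric Set Real

noncomputable section

/-- The level set `S_D` of incompressible vectors whose LCD is between `D` and `2D`. -/
def levelSet (N : ℕ) (δ ρ γ α D : ℝ) : Set (EuclideanSpace ℝ (Fin N)) :=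
  {x | x ∈ Incomp N δ ρ ∧ D ≤ lcdVec α γ x ∧ lcdVec α γ x < 2 * D}

theorem finite_setOf_sum_eq (α : Type*) [Fintype α] (m : ℕ) :
    {P : α → ℕ | ∑ a, P a = m}.Finite := by
  classical
  exact Set.finite_coe_iff.mp (.of_equiv _ (Sym.equivNatSumOfFintype α m))

theorem ncard_setOf_sum_eq (α : Type*) [Fintype α] (m : ℕ) :
    {P : α → ℕ | ∑ a, P a = m}.ncard = (Fintype.card α + m - 1).choose m := by
  classical
  rw [← Nat.card_coe_set_eq]
  change Nat.card {P : α → ℕ // ∑ a, P a = m} = _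
  rw [← Nat.card_congr (Sym.equivNatSumOfFintype α m), Sym.natCard_sym_eq_choose,
    Nat.card_eq_fintype_card]

theorem finite_setOf_sum_le_and_ncard_le (N m : ℕ) : {g : Fin N → ℕ | ∑ i, g i ≤ m}.Finite ∧
    {g : Fin N → ℕ | ∑ i, g i ≤ m}.ncard ≤ (N + m).choose N := by
  set addSlack : (Fin N → ℕ) → Option (Fin N) → ℕ := fun g o => o.elim (m - ∑ i, g i) g
  have hmaps : MapsTo addSlack {g | ∑ i, g i ≤ m} {P | ∑ a, P a = m} := fun g hg => by
    simp only [mem_ofPred_eq, Fintype.sum_option, addSlack, Option.elim_none,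
      Option.elim_some] at hg ⊢
    omega
  have hinj : InjOn addSlack {g | ∑ i, g i ≤ m} := fun g _ h _ hgh =>
    funext fun i => congrFun hgh (some i)
  refine ⟨(finite_setOf_sum_eq _ m).of_injOn hmaps hinj, ?_⟩
  calc _ ≤ {P : Option (Fin N) → ℕ | ∑ a, P a = m}.ncard :=
        ncard_le_ncard_of_injOn addSlack hmaps hinj (finite_setOf_sum_eq _ m)
    _ = (N + m).choose N := by
        rw [ncard_setOf_sum_eq, Fintype.card_option, Fintype.card_fin, Nat.add_right_comm,
          Nat.add_sub_cancel, Nat.choose_symm_add]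

theorem EuclideanSpace.sum_abs_le_sqrt_card_mul_norm {N : ℕ} (v : EuclideanSpace ℝ (Fin N)) :
    ∑ i, |v i| ≤ √N * ‖v‖ := by
  have hsq : (∑ i, |v i|) ^ 2 ≤ (√N * ‖v‖) ^ 2 := by
    calc (∑ i, |v i|) ^ 2 ≤ N * ∑ i, |v i| ^ 2 := by
          simpa using sq_sum_le_card_mul_sum_sq (s := Finset.univ) (f := fun i => |v i|)
      _ = (√N * ‖v‖) ^ 2 := by
          simp [mul_pow, EuclideanSpace.real_norm_sq_eq, sq_abs]
  exact (pow_le_pow_iff_left₀ (by positivity) (by positivity) two_ne_zero).mp hsq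

theorem Int.eq_of_natAbs_eq_of_nonneg_iff {z w : ℤ} (habs : z.natAbs = w.natAbs)
    (hsign : 0 ≤ z ↔ 0 ≤ w) : z = w := by
  rcases Int.natAbs_eq_natAbs_iff.mp habs with h | h <;> omega

theorem Nat.floor_abs_intCast (z : ℤ) : ⌊|(z : ℝ)|⌋₊ = z.natAbs := by
  rw [← Int.cast_abs, ← Int.natCast_natAbs, Int.cast_natCast, Nat.floor_natCast]

theorem finite_intLattice_inter_closedBall_and_ncard_le (N : ℕ) (R : ℝ) :
    (intLattice N ∩ closedBall 0 R).Finite ∧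
      (intLattice N ∩ closedBall 0 R).ncard ≤ 2 ^ N * (N + ⌊√N * R⌋₊).choose N := by
  set G := {g : Fin N → ℕ | ∑ i, g i ≤ ⌊√N * R⌋₊}
  set code : EuclideanSpace ℝ (Fin N) → (Fin N → Bool) × (Fin N → ℕ) :=
    fun v => (fun i => decide (0 ≤ v i), fun i => ⌊|v i|⌋₊)
  have hmaps : MapsTo code (intLattice N ∩ closedBall 0 R) (univ ×ˢ G) := by
    rintro v ⟨-, hv⟩
    refine ⟨mem_univ _, Nat.le_floor ?_⟩
    calc ((∑ i, ⌊|v i|⌋₊ : ℕ) : ℝ) ≤ ∑ i, |v i| := by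
          push_cast
          exact Finset.sum_le_sum fun i _ => Nat.floor_le (abs_nonneg _)
      _ ≤ √N * ‖v‖ := EuclideanSpace.sum_abs_le_sqrt_card_mul_norm v
      _ ≤ √N * R := by gcongr; simpa using hv
  have hinj : InjOn code (intLattice N ∩ closedBall 0 R) := by
    rintro v ⟨hv, -⟩ w ⟨hw, -⟩ hvw
    simp only [code, Prod.mk.injEq, funext_iff] at hvw
    ext i
    obtain ⟨z, hz⟩ := hv i
    obtain ⟨z', hz'⟩ := hw i
    have hsign := decide_eq_decide.mp (hvw.1 i)
    have habs := hvw.2 i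
    rw [hz, hz', Int.cast_nonneg_iff, Int.cast_nonneg_iff] at hsign
    rw [hz, hz', Nat.floor_abs_intCast, Nat.floor_abs_intCast] at habs
    rw [hz, hz', Int.eq_of_natAbs_eq_of_nonneg_iff habs hsign]
  obtain ⟨hGfin, hGcard⟩ := finite_setOf_sum_le_and_ncard_le N ⌊√N * R⌋₊
  have hfin : (univ ×ˢ G).Finite := (finite_univ (α := Fin N → Bool)).prod hGfin
  refine ⟨hfin.of_injOn hmaps hinj, ?_⟩
  calc _ ≤ (univ ×ˢ G).ncard := ncard_le_ncard_of_injOn code hmaps hinj hfin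
    _ ≤ 2 ^ N * (N + ⌊√N * R⌋₊).choose N := by
        rw [ncard_prod, ncard_univ, Nat.card_fun, Nat.card_eq_fintype_card, Fintype.card_bool,
          Nat.card_eq_fintype_card, Fintype.card_fin]
        exact Nat.mul_le_mul_left _ hGcard

theorem Nat.choose_le_exp_mul_div_pow (n k : ℕ) : (n.choose k : ℝ) ≤ (exp 1 * n / k) ^ k := by
  rcases k.eq_zero_or_pos with rfl | hk
  · simp
  have hk' : (0 : ℝ) < k := by exact_mod_cast hk
  have hfact : (k : ℝ) ^ k / k.factorial ≤ exp 1 ^ k := by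
    simpa [← Real.exp_nat_mul] using Real.pow_div_factorial_le_exp _ hk'.le k
  calc (n.choose k : ℝ) ≤ n ^ k / k.factorial := Nat.choose_le_pow_div k n
    _ = (n / k) ^ k * (k ^ k / k.factorial) := by rw [div_pow]; field_simp
    _ ≤ (n / k) ^ k * exp 1 ^ k := by gcongr
    _ = (exp 1 * n / k) ^ k := by rw [← mul_pow]; ring

theorem two_pow_mul_choose_le {c D : ℝ} {N m : ℕ} (hc : 0 < c) (hD : c * √N ≤ D)
    (hm : (m : ℝ) ≤ 3 * D * √N) :
    (2 ^ N * (N + m).choose N : ℝ) ≤ (2 * exp 1 * (3 + c⁻¹) * D / √N) ^ N := by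
  have hbase : 2 * exp 1 * ((N + m : ℕ) : ℝ) / N ≤ 2 * exp 1 * (3 + c⁻¹) * D / √N := by
    rcases N.eq_zero_or_pos with rfl | hN
    · simp
    have hsN : 0 < √N := Real.sqrt_pos.mpr (by exact_mod_cast hN)
    have hNsq : (N : ℝ) = √N * √N := (Real.mul_self_sqrt N.cast_nonneg).symm
    have hNle : (N : ℝ) ≤ c⁻¹ * D * √N := by
      calc (N : ℝ) = √N * √N := hNsq
        _ ≤ c⁻¹ * D * √N := by
          gcongr
          rw [← div_eq_inv_mul, le_div_iff₀ hc]
          linarith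
    rw [div_le_div_iff₀ (by positivity) hsN]
    calc 2 * exp 1 * ((N + m : ℕ) : ℝ) * √N ≤ 2 * exp 1 * ((3 + c⁻¹) * D * √N) * √N := by
          push_cast
          gcongr
          linarith
      _ = 2 * exp 1 * (3 + c⁻¹) * D * N := by
          linear_combination (-(2 * exp 1 * (3 + c⁻¹) * D)) * hNsq
  calc (2 ^ N * (N + m).choose N : ℝ) ≤ 2 ^ N * (exp 1 * ((N + m : ℕ) : ℝ) / N) ^ N := by
        gcongr; exact Nat.choose_le_exp_mul_div_pow _ _
    _ = (2 * exp 1 * ((N + m : ℕ) : ℝ) / N) ^ N := by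
        rw [← mul_pow, ← mul_div_assoc, ← mul_assoc]
    _ ≤ _ := by gcongr

theorem dist_le_four_mul_of_dist_smul_le {E : Type*} [SeminormedAddCommGroup E] [NormedSpace ℝ E]
    {x y p : E} {s t r : ℝ} (hxy : ‖x‖ = ‖y‖) (hs : 0 ≤ s) (ht : 0 ≤ t)
    (hx : dist x (s • p) ≤ r) (hy : dist y (t • p) ≤ r) : dist x y ≤ 4 * r := by
  have hxs : |‖x‖ - ‖s • p‖| ≤ r := (abs_norm_sub_norm_le _ _).trans (dist_eq_norm x _ ▸ hx)
  have hyt : |‖y‖ - ‖t • p‖| ≤ r := (abs_norm_sub_norm_le _ _).trans (dist_eq_norm y _ ▸ hy)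
  have hray : dist (s • p) (t • p) = |‖s • p‖ - ‖t • p‖| := by
    rw [dist_eq_norm, ← sub_smul, norm_smul, norm_smul, norm_smul, Real.norm_eq_abs,
      Real.norm_eq_abs, Real.norm_eq_abs, abs_of_nonneg hs, abs_of_nonneg ht, ← sub_mul,
      abs_mul, abs_of_nonneg (norm_nonneg p)]
  have hst : dist (s • p) (t • p) ≤ 2 * r := by
    rw [hray]
    rw [hxy] at hxs
    rw [abs_le] at hxs hyt ⊢
    constructor <;> linarith [hxs.1, hxs.2, hyt.1, hyt.2]
  calc dist x y ≤ dist x (s • p) + dist (s • p) (t • p) + dist (t • p) y := dist_triangle4 _ _ _ _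
    _ ≤ r + 2 * r + r := by gcongr; rwa [dist_comm]
    _ = 4 * r := by ring

theorem exists_finite_net_of_mapsTo {X ι : Type*} [PseudoMetricSpace X] [Nonempty X] {S : Set X}
    {T : Set ι} {f : X → ι} {ε : ℝ} (hT : T.Finite) (hf : MapsTo f S T)
    (hfiber : ∀ x ∈ S, ∀ y ∈ S, f x = f y → dist x y ≤ ε) :
    ∃ 𝒩 ⊆ S, (∀ x ∈ S, ∃ y ∈ 𝒩, dist x y ≤ ε) ∧ 𝒩.Finite ∧ 𝒩.ncard ≤ T.ncard := by
  have hfS : (f '' S).Finite := hT.subset hf.image_subset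
  refine ⟨Function.invFunOn f S '' (f '' S), ?_, fun x hx => ?_, hfS.image _, ?_⟩
  · rintro _ ⟨_, ⟨x, hx, rfl⟩, rfl⟩
    exact Function.invFunOn_mem ⟨x, hx, rfl⟩
  · refine ⟨_, mem_image_of_mem _ (mem_image_of_mem f hx), hfiber x hx _ ?_ ?_⟩
    · exact Function.invFunOn_mem ⟨x, hx, rfl⟩
    · exact (Function.invFunOn_eq ⟨x, hx, rfl⟩).symm
  · exact (ncard_image_le hfS).trans (ncard_le_ncard hf.image_subset hT)

theorem exists_lt_and_dist_intLattice_lt_of_lcdVec_lt {N : ℕ} {α γ T : ℝ}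
    {a : EuclideanSpace ℝ (Fin N)} (hpos : 0 < lcdVec α γ a) (hlt : lcdVec α γ a < T) :
    ∃ θ, lcdVec α γ a ≤ θ ∧ θ < T ∧ ∃ v ∈ intLattice N, dist (θ • a) v < α := by
  set Θ := {θ : ℝ | 0 < θ ∧ infDist (θ • a) (intLattice N) < min (γ * ‖θ • a‖) α}
  have hbdd : BddBelow Θ := ⟨0, fun θ hθ => hθ.1.le⟩
  -- an empty set of denominators would give `lcdVec α γ a = sInf ∅ = 0`
  have hne : Θ.Nonempty := nonempty_iff_ne_empty.mpr fun h => by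
    change 0 < sInf Θ at hpos
    rw [h, Real.sInf_empty] at hpos
    exact hpos.false
  obtain ⟨θ, hθΘ, hθT⟩ := (csInf_lt_iff hbdd hne).mp hlt
  have hlattice : (intLattice N).Nonempty := ⟨0, fun _ => ⟨0, by simp⟩⟩
  exact ⟨θ, csInf_le hbdd hθΘ, hθT,
    (infDist_lt_iff hlattice).mp (hθΘ.2.trans_le (min_le_right _ _))⟩

theorem exists_intLattice_near_ray_of_mem_levelSet {N : ℕ} {δ ρ γ α D : ℝ} (hαD : α ≤ D)
    {x : EuclideanSpace ℝ (Fin N)} (hx : x ∈ levelSet N δ ρ γ α D) :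
    ∃ v ∈ intLattice N ∩ closedBall 0 (3 * D), ∃ t : ℝ, 0 ≤ t ∧ dist x (t • v) ≤ α / D := by
  obtain ⟨⟨hx1, -⟩, hDle, hlt2D⟩ := hx
  have hD : 0 < D := by linarith
  obtain ⟨θ, hlcdθ, hθ2D, v, hv, hdist⟩ :=
    exists_lt_and_dist_intLattice_lt_of_lcdVec_lt (hD.trans_le hDle) hlt2D
  have hDθ : D ≤ θ := hDle.trans hlcdθ
  have hθ : 0 < θ := hD.trans_le hDθ
  have hnorm : ‖θ • x‖ = θ := by rw [norm_smul, hx1, mul_one, Real.norm_of_nonneg hθ.le]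
  refine ⟨v, ⟨hv, ?_⟩, θ⁻¹, inv_nonneg.mpr hθ.le, ?_⟩
  · rw [mem_closedBall_zero_iff]
    calc ‖v‖ ≤ ‖θ • x‖ + dist (θ • x) v := dist_eq_norm (θ • x) v ▸ norm_le_norm_add_norm_sub ..
      _ ≤ 3 * D := by linarith
  · calc dist x (θ⁻¹ • v) = dist (θ⁻¹ • θ • x) (θ⁻¹ • v) := by rw [inv_smul_smul₀ hθ.ne']
      _ = θ⁻¹ * dist (θ • x) v := by rw [dist_smul₀, Real.norm_of_nonneg (inv_nonneg.mpr hθ.le)]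
      _ ≤ D⁻¹ * α := by gcongr
      _ = α / D := inv_mul_eq_div D α

/-- **Nets of level sets.** For `D ≥ c₀√N` there exists a `(4α/D)`-net of the level set
`S_D = { x ∈ Incomp(δ,ρ) : D ≤ LCD_{α,γ}(x) < 2D }`, contained in `S_D`, of cardinality at
most `(C₀ D/√N)^N`, with `C₀` depending only on `c₀`. -/
theorem net_of_level_set (c₀ : ℝ) (hc₀ : 0 < c₀) :
    ∃ C₀ : ℝ, 0 < C₀ ∧
    ∀ (N : ℕ) (δ ρ γ α D : ℝ),
      δ ∈ Set.Ioo (0 : ℝ) 1 → ρ ∈ Set.Ioo (0 : ℝ) 1 → γ ∈ Set.Ioo (0 : ℝ) 1 → 0 < α →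
      c₀ * Real.sqrt N ≤ D →
      ∃ 𝒩 : Set (EuclideanSpace ℝ (Fin N)),
        𝒩 ⊆ levelSet N δ ρ γ α D ∧
        (∀ x ∈ levelSet N δ ρ γ α D, ∃ y ∈ 𝒩, dist x y ≤ 4 * α / D) ∧
        𝒩.Finite ∧ (𝒩.ncard : ℝ) ≤ (C₀ * D / Real.sqrt N) ^ N := by
  refine ⟨2 * exp 1 * (3 + c₀⁻¹), by positivity, fun N δ ρ γ α D _ _ _ _ hD => ?_⟩
  have hD0 : 0 ≤ D := (by positivity : 0 ≤ c₀ * √N).trans hD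
  have hbound (m : ℕ) (hm : (m : ℝ) ≤ 3 * D * √N) := two_pow_mul_choose_le hc₀ hD hm
  set S := levelSet N δ ρ γ α D
  rcases le_or_gt α D with hαD | hDα
  · choose! v hvT t ht hxv using fun x (hx : x ∈ S) =>
      exists_intLattice_near_ray_of_mem_levelSet hαD hx
    obtain ⟨hTfin, hTcard⟩ := finite_intLattice_inter_closedBall_and_ncard_le N (3 * D)
    obtain ⟨𝒩, h𝒩S, hnet, hfin, hcard⟩ := exists_finite_net_of_mapsTo hTfin hvT
      (ε := 4 * α / D) fun x hx y hy hxy => by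
        rw [mul_div_assoc]
        exact dist_le_four_mul_of_dist_smul_le (hx.1.1.trans hy.1.1.symm) (ht x hx) (ht y hy)
          (hxv x hx) (hxy ▸ hxv y hy)
    refine ⟨𝒩, h𝒩S, hnet, hfin, (Nat.cast_le.mpr (hcard.trans hTcard)).trans ?_⟩
    push_cast
    exact hbound _ ((Nat.floor_le (by positivity)).trans_eq (by ring))
  -- for `D < α` the whole sphere, of diameter `2 < 4α / D`, is one cell
  · obtain ⟨𝒩, h𝒩S, hnet, hfin, hcard⟩ := exists_finite_net_of_mapsTo (f := fun _ => ())
      finite_univ (mapsTo_univ _ S) (ε := 4 * α / D) fun x hx y hy _ => by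
        have hDpos : 0 < D := by linarith [hx.2.1.trans_lt hx.2.2]
        calc dist x y ≤ ‖x‖ + ‖y‖ := dist_le_norm_add_norm x y
          _ = 2 := by rw [hx.1.1, hy.1.1]; norm_num
          _ ≤ 4 * α / D := by rw [le_div_iff₀ hDpos]; linarith
    refine ⟨𝒩, h𝒩S, hnet, hfin, ?_⟩
    calc (𝒩.ncard : ℝ) ≤ 1 := by simpa using hcard
      _ ≤ 2 ^ N * (N + 0).choose N := by simp [one_le_pow₀]
      _ ≤ _ := hbound 0 (by simp; positivity)
end
end
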